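/- arXiv:2209.15240 — 2 statements merged into one kernel-verified Lean document; each statement's English description precedes it below -/
import Mathlib

section
/- Link-transformation coverage: Let f(A, X) = 𝟙ᵀ(A + (1+ε)I)·X·Θ with D + N + Nε ≠ 0 where D = Σ_{ij}A_{ij}. Then for any modified adjacency matrix A' ∈ ℝ^{N×N}, there exists a row vector p ∈ ℝ^{1×F} such that f(A, X + 𝟙·p) = f(A', X). -/
open Matrix BigOperators

/-- One-layer linear GIN with sum readout: 𝟙ᵀ (A + (1+ε) I) X Θ as a row vector. -/
noncomputable def gin {n : Type*} [Fintype n] [DecidableEq n] {F Fp : ℕ}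
    (ε : ℝ) (Θ : Matrix (Fin F) (Fin Fp) ℝ)
    (A : Matrix n n ℝ) (X : Matrix n (Fin F) ℝ) : Fin Fp → ℝ :=
  fun j => ∑ i, ((A + (1 + ε) • (1 : Matrix n n ℝ)) * X * Θ) i j

/-- 𝟙·p : the matrix each of whose rows is the row vector p. -/
def prompt (n : Type*) {F : ℕ} (p : Fin F → ℝ) : Matrix n (Fin F) ℝ :=
  Matrix.of fun _ j => p j

/-!
Since `f` is linear in `X`, the prompt contributes `f(A, 𝟙 p) = (𝟙ᵀ M 𝟙) · p Θ`, where
`M = A + (1+ε) I` has entry sum `𝟙ᵀ M 𝟙 = D + N + N ε`, while the change of graph contributes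
`f(A', X) - f(A, X) = 𝟙ᵀ (A' - A) X Θ`. So `p = 𝟙ᵀ (A' - A) X / (D + N + N ε)` works.
-/

lemma prompt_eq_vecMulVec (n : Type*) {F : ℕ} (p : Fin F → ℝ) : prompt n p = vecMulVec 1 p := by
  ext i j
  simp [prompt, vecMulVec]

section

variable {n : Type*} [Fintype n] [DecidableEq n] {F Fp : ℕ}

lemma one_vecMul_add_smul_one_dotProduct_one {α : Type*} [CommSemiring α] (A : Matrix n n α)
    (c : α) :
    1 ᵥ* (A + c • 1) ⬝ᵥ 1 = ∑ i, ∑ j, A i j + Fintype.card n * c := by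
  simp [vecMul_add, vecMul_smul, dotProduct_one, vecMul, one_dotProduct, Finset.sum_add_distrib,
    Finset.sum_comm (f := fun i j => A i j)]

variable (ε : ℝ) (Θ : Matrix (Fin F) (Fin Fp) ℝ)

lemma gin_eq_vecMul (A : Matrix n n ℝ) (X : Matrix n (Fin F) ℝ) :
    gin ε Θ A X = 1 ᵥ* (A + (1 + ε) • 1) ᵥ* X ᵥ* Θ := by
  ext j
  rw [vecMul_vecMul, vecMul_vecMul, vecMul, one_dotProduct, gin, Matrix.mul_assoc]

lemma gin_add_prompt (A : Matrix n n ℝ) (X : Matrix n (Fin F) ℝ) (p : Fin F → ℝ) :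
    gin ε Θ A (X + prompt n p)
      = gin ε Θ A X + (∑ i, ∑ j, A i j + Fintype.card n + Fintype.card n * ε) • (p ᵥ* Θ) := by
  rw [gin_eq_vecMul, gin_eq_vecMul, vecMul_add, prompt_eq_vecMulVec, vecMul_vecMulVec,
    add_vecMul, smul_vecMul, one_vecMul_add_smul_one_dotProduct_one, mul_one_add, add_assoc]

lemma gin_eq_gin_add (A A' : Matrix n n ℝ) (X : Matrix n (Fin F) ℝ) :
    gin ε Θ A' X = gin ε Θ A X + 1 ᵥ* (A' - A) ᵥ* X ᵥ* Θ := by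
  rw [gin_eq_vecMul, gin_eq_vecMul, ← add_vecMul, ← add_vecMul, ← vecMul_add]
  congr 3
  abel

end

theorem stmt4 (N F Fp : ℕ) (A A' : Matrix (Fin N) (Fin N) ℝ)
    (X : Matrix (Fin N) (Fin F) ℝ) (ε : ℝ) (Θ : Matrix (Fin F) (Fin Fp) ℝ)
    (hD : (∑ i, ∑ j, A i j) + N + N * ε ≠ 0) :
    ∃ p : Fin F → ℝ, gin ε Θ A (X + prompt (Fin N) p) = gin ε Θ A' X := by
  refine ⟨((∑ i, ∑ j, A i j) + N + N * ε)⁻¹ • (1 ᵥ* (A' - A) ᵥ* X), ?_⟩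
  rw [gin_add_prompt, Fintype.card_fin, smul_vecMul, smul_smul, mul_inv_cancel₀ hD, one_smul,
    gin_eq_gin_add ε Θ A A' X]
end

section
/- Mean-readout version of feature coverage: Let f(A, X) = (1/N)·𝟙ᵀ(A + (1+ε)I)·X·Θ (mean readout). If D + N + Nε ≠ 0 (D = Σ_{ij}A_{ij}), then for any X' ∈ ℝ^{N×F} there exists p ∈ ℝ^{1×F} with f(A, X + 𝟙·p) = f(A, X'). -/
/-! With `M = A + (1 + ε) I`, the readout sees `X` only through the column sums `𝟙ᵀ M X`.
The prompt `𝟙 p` shifts these by `(𝟙ᵀ M 𝟙) p = (D + N + N ε) p`, so when this scalar is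
nonzero the column sums of `M X'`, and hence the output on `X'`, can be matched. -/

open Matrix BigOperators

/-- One-layer linear GIN with mean readout. -/
noncomputable def ginMean (N : ℕ) {F Fp : ℕ} (ε : ℝ) (Θ : Matrix (Fin F) (Fin Fp) ℝ)
    (A : Matrix (Fin N) (Fin N) ℝ) (X : Matrix (Fin N) (Fin F) ℝ) : Fin Fp → ℝ :=
  fun j => (1 / (N : ℝ)) * ∑ i, ((A + (1 + ε) • (1 : Matrix (Fin N) (Fin N) ℝ)) * X * Θ) i j

section

variable {n : Type*} [Fintype n] {F : ℕ}

theorem vecMul_mul_prompt (M : Matrix n n ℝ) (p : Fin F → ℝ) :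
    (1 : n → ℝ) ᵥ* (M * prompt n p) = (∑ i, ∑ j, M i j) • p := by
  ext k
  simp only [vecMul, dotProduct, mul_apply, prompt, of_apply, Pi.one_apply, one_mul,
    Pi.smul_apply, smul_eq_mul, Finset.sum_mul]

theorem exists_vecMul_mul_add_prompt_eq (M : Matrix n n ℝ) (hM : ∑ i, ∑ j, M i j ≠ 0)
    (X X' : Matrix n (Fin F) ℝ) :
    ∃ p : Fin F → ℝ, (1 : n → ℝ) ᵥ* (M * (X + prompt n p)) = 1 ᵥ* (M * X') := by
  refine ⟨(∑ i, ∑ j, M i j)⁻¹ • (1 ᵥ* (M * X') - 1 ᵥ* (M * X)), ?_⟩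
  rw [Matrix.mul_add, vecMul_add, vecMul_mul_prompt, smul_smul, mul_inv_cancel₀ hM, one_smul,
    add_sub_cancel]

theorem sum_sum_add_smul_one [DecidableEq n] (A : Matrix n n ℝ) (c : ℝ) :
    ∑ i, ∑ j, (A + c • (1 : Matrix n n ℝ)) i j = ∑ i, ∑ j, A i j + Fintype.card n * c := by
  simp only [Matrix.add_apply, Matrix.smul_apply, one_apply, smul_eq_mul, mul_ite, mul_one,
    mul_zero, Finset.sum_add_distrib, Finset.sum_ite_eq, Finset.mem_univ, if_true, Finset.sum_const,
    Finset.card_univ, nsmul_eq_mul]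

end

theorem ginMean_eq_vecMul (N : ℕ) {F Fp : ℕ} (ε : ℝ) (Θ : Matrix (Fin F) (Fin Fp) ℝ)
    (A : Matrix (Fin N) (Fin N) ℝ) (X : Matrix (Fin N) (Fin F) ℝ) :
    ginMean N ε Θ A X = (1 / (N : ℝ)) • ((1 ᵥ* ((A + (1 + ε) • 1) * X)) ᵥ* Θ) := by
  ext j
  rw [Pi.smul_apply, smul_eq_mul, vecMul_vecMul]
  simp only [ginMean, vecMul, dotProduct, Pi.one_apply, one_mul]

theorem stmt11_general (N F Fp : ℕ) (A : Matrix (Fin N) (Fin N) ℝ)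
    (X X' : Matrix (Fin N) (Fin F) ℝ) (ε : ℝ) (Θ : Matrix (Fin F) (Fin Fp) ℝ)
    (hD : (∑ i, ∑ j, A i j) + N + N * ε ≠ 0) :
    ∃ p : Fin F → ℝ, ginMean N ε Θ A (X + prompt (Fin N) p) = ginMean N ε Θ A X' := by
  have hM : ∑ i, ∑ j, (A + (1 + ε) • (1 : Matrix (Fin N) (Fin N) ℝ)) i j ≠ 0 := by
    rw [sum_sum_add_smul_one, Fintype.card_fin]
    convert hD using 1
    ring
  obtain ⟨p, hp⟩ := exists_vecMul_mul_add_prompt_eq _ hM X X'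
  exact ⟨p, by rw [ginMean_eq_vecMul, ginMean_eq_vecMul, hp]⟩

theorem stmt11 (N F Fp : ℕ) (hN : 0 < N) (A : Matrix (Fin N) (Fin N) ℝ)
    (X X' : Matrix (Fin N) (Fin F) ℝ) (ε : ℝ) (Θ : Matrix (Fin F) (Fin Fp) ℝ)
    (hD : (∑ i, ∑ j, A i j) + N + N * ε ≠ 0) :
    ∃ p : Fin F → ℝ, ginMean N ε Θ A (X + prompt (Fin N) p) = ginMean N ε Θ A X' :=
  stmt11_general N F Fp A X X' ε Θ hD
end
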